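/- arXiv:1805.09782 — 4 statements merged into one kernel-verified Lean document; each statement's English description precedes it below -/
import Mathlib

section
/- Let d ≥ 1, let X ⊂ ℝ^d be a finite set with |X| = l, and let D ⊂ S^{d−1} be a finite set of unit vectors in general position, meaning that every subset of D of cardinality d is linearly independent. Let y ∈ ℝ^d and suppose there is a subset V' ⊆ D with |V'| ≥ (d−1)·l + 1 such that for every v ∈ V' there exists x ∈ X with ⟨v, y⟩ = ⟨v, x⟩ (i.e., y lies on the hyperplane with normal v passing through x). Then y ∈ X. -/
/-!
By pigeonhole, more than `(d - 1) * |X|` hyperplanes through `y` with normals in `D` force some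
`x ∈ X` to be the base point of at least `d` of them. Those `d` normals are linearly independent,
hence a basis, and `y - x` is orthogonal to all of them, so `y = x`.
-/

open Finset Module
open scoped InnerProductSpace RealInnerProductSpace

section

variable {𝕜 E : Type*} [RCLike 𝕜] [NormedAddCommGroup E] [InnerProductSpace 𝕜 E]
  [FiniteDimensional 𝕜 E]

theorem eq_of_inner_eq_of_linearIndependent {T : Finset E}
    (hT : LinearIndependent 𝕜 ((↑) : T → E)) (hcard : #T = finrank 𝕜 E) {x y : E}
    (h : ∀ v ∈ T, ⟪v, x⟫_𝕜 = ⟪v, y⟫_𝕜) : x = y :=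
  InnerProductSpace.ext_inner_left_basis (basisOfLinearIndependentOfCardEqFinrank' _ hT (by simpa using hcard))
    fun v => by simpa [basisOfLinearIndependentOfCardEqFinrank'] using h v v.2

theorem mem_of_card_lt_of_forall_exists_inner_eq {X V : Finset E}
    (hgen : ∀ S ⊆ V, #S = finrank 𝕜 E → LinearIndependent 𝕜 ((↑) : S → E))
    (hcard : #X * (finrank 𝕜 E - 1) < #V) {y : E}
    (hplane : ∀ v ∈ V, ∃ x ∈ X, ⟪v, y⟫_𝕜 = ⟪v, x⟫_𝕜) : y ∈ X := by
  classical
  choose! f hfX hf using hplane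
  obtain ⟨x, hx, hfiber⟩ := exists_lt_card_fiber_of_mul_lt_card_of_maps_to hfX hcard
  obtain ⟨T, hT, hTcard⟩ :=
    exists_subset_card_eq (show finrank 𝕜 E ≤ #{v ∈ V | f v = x} by omega)
  have hTV : T ⊆ V := hT.trans (filter_subset _ _)
  suffices y = x from this ▸ hx
  refine eq_of_inner_eq_of_linearIndependent (hgen T hTV hTcard) hTcard fun v hv => ?_
  simpa [(mem_filter.mp (hT hv)).2] using hf v (hTV hv)

end

theorem stmt0_general (d l : ℕ)
    (X : Finset (EuclideanSpace ℝ (Fin d))) (hXcard : X.card = l)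
    (D : Finset (EuclideanSpace ℝ (Fin d)))
    (hgen : ∀ S : Finset (EuclideanSpace ℝ (Fin d)), S ⊆ D → S.card = d →
      LinearIndependent ℝ (fun v : S => (v : EuclideanSpace ℝ (Fin d))))
    (y : EuclideanSpace ℝ (Fin d))
    (V' : Finset (EuclideanSpace ℝ (Fin d))) (hV'sub : V' ⊆ D)
    (hV'card : (d - 1) * l + 1 ≤ V'.card)
    (hplane : ∀ v ∈ V', ∃ x ∈ X, ⟪v, y⟫ = ⟪v, x⟫) :
    y ∈ X := by
  have hdim : finrank ℝ (EuclideanSpace ℝ (Fin d)) = d := finrank_euclideanSpace_fin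
  refine mem_of_card_lt_of_forall_exists_inner_eq
    (fun S hS hcard => hgen S (hS.trans hV'sub) (hcard.trans hdim)) ?_ hplane
  rw [hdim, hXcard, mul_comm]
  omega

/-- pigeonhole hyperplane lemma. If `X ⊂ ℝ^d` has `l` points, `D` is a finite
set of unit vectors in general position (every `d` of them are linearly independent),
and at least `(d-1)*l + 1` hyperplanes `H(v, x)` with `v ∈ D`, `x ∈ X` pass through `y`,
then `y ∈ X`. -/
theorem stmt0 (d l : ℕ) (hd : 1 ≤ d)
    (X : Finset (EuclideanSpace ℝ (Fin d))) (hXcard : X.card = l)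
    (D : Finset (EuclideanSpace ℝ (Fin d)))
    (hDunit : ∀ v ∈ D, ‖v‖ = 1)
    (hgen : ∀ S : Finset (EuclideanSpace ℝ (Fin d)), S ⊆ D → S.card = d →
      LinearIndependent ℝ (fun v : S => (v : EuclideanSpace ℝ (Fin d))))
    (y : EuclideanSpace ℝ (Fin d))
    (V' : Finset (EuclideanSpace ℝ (Fin d))) (hV'sub : V' ⊆ D)
    (hV'card : (d - 1) * l + 1 ≤ V'.card)
    (hplane : ∀ v ∈ V', ∃ x ∈ X, ⟪v, y⟫ = ⟪v, x⟫) :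
    y ∈ X :=
  stmt0_general d l X hXcard D hgen y V' hV'sub hV'card hplane
end

section
/- Let K be a geometric simplicial complex in ℝ^d with finitely many faces and vertex set X. If v, w ∈ S^{d−1} lie in the same connected component of Σ(X), then for every vertex x of K the lower stars coincide: K^{(x,v)} = K^{(x,w)}. -/
open scoped RealInnerProductSpace

/-- The union of equalizer hyperspheres `W(X) ⊆ S^{d-1}` for a set of points `X ⊆ ℝ^d`. -/
def hyperplaneUnionSet {d : ℕ} (X : Set (EuclideanSpace ℝ (Fin d))) :
    Set (EuclideanSpace ℝ (Fin d)) :=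
  ⋃ (x ∈ X) (y ∈ X) (_ : x ≠ y),
    {v ∈ Metric.sphere (0 : EuclideanSpace ℝ (Fin d)) 1 | ⟪v, x⟫ = ⟪v, y⟫}

/-- `Σ(X) = S^{d-1} \ W(X)`. -/
def sigmaSet {d : ℕ} (X : Set (EuclideanSpace ℝ (Fin d))) :
    Set (EuclideanSpace ℝ (Fin d)) :=
  Metric.sphere (0 : EuclideanSpace ℝ (Fin d)) 1 \ hyperplaneUnionSet X

/-- The lower star `K^{(x,v)}`: the faces of `K` containing the vertex `x` all of whose
vertices have height (in direction `v`) at most that of `x`. -/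
def lowerStar {d : ℕ} (K : Geometry.SimplicialComplex ℝ (EuclideanSpace ℝ (Fin d)))
    (x v : EuclideanSpace ℝ (Fin d)) : Set (Finset (EuclideanSpace ℝ (Fin d))) :=
  {σ ∈ K.faces | x ∈ σ ∧ ∀ y ∈ σ, ⟪v, y⟫ ≤ ⟪v, x⟫}

/-- On `Σ(X)`, the inner products against two distinct points of `X` never agree. -/
lemma sigma_ne {d : ℕ} {X : Set (EuclideanSpace ℝ (Fin d))}
    {x y u : EuclideanSpace ℝ (Fin d)} (hx : x ∈ X) (hy : y ∈ X) (hxy : x ≠ y)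
    (hu : u ∈ sigmaSet X) : ⟪u, x⟫ ≠ ⟪u, y⟫ := by
  intro h
  exact hu.2 (Set.mem_iUnion₂.2 ⟨x, hx, Set.mem_iUnion₂.2 ⟨y, hy,
    Set.mem_iUnion.2 ⟨hxy, ⟨hu.1, h⟩⟩⟩⟩)

/-- Sign preservation along the connected component. -/
lemma sign_preserved {d : ℕ} {X : Set (EuclideanSpace ℝ (Fin d))}
    {x y : EuclideanSpace ℝ (Fin d)} (hx : x ∈ X) (hy : y ∈ X) (hxy : x ≠ y)
    {a b v : EuclideanSpace ℝ (Fin d)}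
    (hv : v ∈ sigmaSet X)
    (ha : a ∈ connectedComponentIn (sigmaSet X) v)
    (hb : b ∈ connectedComponentIn (sigmaSet X) v)
    (hlt : ⟪a, y⟫ < ⟪a, x⟫) : ⟪b, y⟫ < ⟪b, x⟫ := by
  set S := connectedComponentIn (sigmaSet X) v with hS
  have hsub : S ⊆ sigmaSet X := connectedComponentIn_subset _ _
  have hconn : IsPreconnected S := (isConnected_connectedComponentIn_iff.2 hv).isPreconnected
  have hcont : ContinuousOn (fun u : EuclideanSpace ℝ (Fin d) => ⟪u, x⟫ - ⟪u, y⟫) S := by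
    exact ((continuous_id.inner continuous_const).sub
      (continuous_id.inner continuous_const)).continuousOn
  by_contra hle
  push_neg at hle
  have h0 : (0 : ℝ) ∈ Set.Icc (⟪b, x⟫ - ⟪b, y⟫) (⟪a, x⟫ - ⟪a, y⟫) :=
    ⟨by linarith, by linarith⟩
  obtain ⟨u, hu, hu0⟩ := hconn.intermediate_value hb ha hcont h0
  exact sigma_ne hx hy hxy (hsub hu) (by simpa [sub_eq_zero] using hu0)

/-- if `v, w` lie in the same connected component of `Σ(X)`, where `X` is the
vertex set of a finite geometric simplicial complex `K` in `ℝ^d`, then the lower stars at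
every vertex coincide: `K^{(x,v)} = K^{(x,w)}`. -/
theorem stmt2 {d : ℕ} (K : Geometry.SimplicialComplex ℝ (EuclideanSpace ℝ (Fin d)))
    (hfin : K.faces.Finite)
    (v w : EuclideanSpace ℝ (Fin d))
    (hv : v ∈ sigmaSet K.vertices)
    (hw : w ∈ connectedComponentIn (sigmaSet K.vertices) v)
    (x : EuclideanSpace ℝ (Fin d)) (hx : x ∈ K.vertices) :
    lowerStar K x v = lowerStar K x w := by
  have hvmem : v ∈ connectedComponentIn (sigmaSet K.vertices) v :=
    mem_connectedComponentIn hv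
  have key : ∀ (a b : EuclideanSpace ℝ (Fin d)),
      a ∈ connectedComponentIn (sigmaSet K.vertices) v →
      b ∈ connectedComponentIn (sigmaSet K.vertices) v →
      ∀ σ ∈ K.faces, x ∈ σ → (∀ y ∈ σ, ⟪a, y⟫ ≤ ⟪a, x⟫) → ∀ y ∈ σ, ⟪b, y⟫ ≤ ⟪b, x⟫ := by
    intro a b ha hb σ hσ hxσ hall y hy
    by_cases hxy : y = x
    · simp [hxy]
    · have hyV : y ∈ K.vertices := by
        rw [Geometry.SimplicialComplex.vertices_eq]
        exact Set.mem_biUnion hσ hy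
      have hne : ⟪a, x⟫ ≠ ⟪a, y⟫ :=
        sigma_ne hx hyV (fun h => hxy h.symm) (connectedComponentIn_subset _ _ ha)
      have hlt : ⟪a, y⟫ < ⟪a, x⟫ := lt_of_le_of_ne (hall y hy) (Ne.symm hne)
      exact le_of_lt (sign_preserved hx hyV (fun h => hxy h.symm) hv ha hb hlt)
  ext σ
  simp only [lowerStar, Set.mem_setOf_eq]
  constructor
  · rintro ⟨h1, h2, h3⟩
    exact ⟨h1, h2, key v w hvmem hw σ h1 h2 h3⟩
  · rintro ⟨h1, h2, h3⟩
    exact ⟨h1, h2, key w v hw hvmem σ h1 h2 h3⟩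
end

section
/- Let K be a geometric simplicial complex in ℝ^d with finitely many faces and vertex set X, and let v, w ∈ S^{d−1} lie in the same connected component of Σ(X). Then there exists an order-preserving bijection φ : ℝ → ℝ such that the combinatorial Euler curves satisfy E_{K,v}(t) = E_{K,w}(φ(t)) for all t ∈ ℝ; in particular, the Euler curve of K in direction w can be deduced from the Euler curve in direction v. -/
open scoped RealInnerProductSpace

/-- The combinatorial Euler curve of `K` in direction `v`:
`E_{K,v}(t) = Σ_{x ∈ X, ⟨v,x⟩ ≤ t} Σ_{σ ∈ K^{(x,v)}} (−1)^{card σ − 1}`. -/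
noncomputable def eulerCurve {d : ℕ}
    (K : Geometry.SimplicialComplex ℝ (EuclideanSpace ℝ (Fin d)))
    (v : EuclideanSpace ℝ (Fin d)) (t : ℝ) : ℤ :=
  ∑ᶠ x ∈ {x ∈ K.vertices | ⟪v, x⟫ ≤ t},
    ∑ᶠ σ ∈ lowerStar K x v, (-1 : ℤ) ^ (σ.card - 1)

/-!
Heights of the vertices in direction `u` are `⟪u, x⟫`, and two distinct vertices have equal
heights exactly on `W(X)`. Along the connected component of `v` in `Σ(X)` the continuous
function `u ↦ ⟪u, y⟫ - ⟪u, x⟫` never vanishes, so its sign does not change: the vertices are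
ordered by height in the same way for `v` and for `w`. Any order-preserving map between two
finite subsets of `ℝ` extends to an order automorphism `φ` of `ℝ` (piecewise linearly), so there is
one with `φ ⟪v, x⟫ = ⟪w, x⟫` for every vertex `x`. Both the sublevel condition `⟪v, x⟫ ≤ t` and the
lower stars are defined by comparing heights, so they are transported by `φ`.
-/

theorem IsPreconnected.pos_iff_pos_of_ne_zero {α : Type*} [TopologicalSpace α] {S : Set α}
    {f : α → ℝ} (hS : IsPreconnected S) (hf : ContinuousOn f S) (hf0 : ∀ u ∈ S, f u ≠ 0)
    {a b : α} (ha : a ∈ S) (hb : b ∈ S) : 0 < f a ↔ 0 < f b := by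
  suffices key : ∀ a ∈ S, ∀ b ∈ S, 0 < f a → 0 < f b from ⟨key a ha b hb, key b hb a ha⟩
  intro a ha b hb hfa
  by_contra! hfb
  obtain ⟨u, hu, hfu⟩ := hS.intermediate_value hb ha hf ⟨hfb, hfa.le⟩
  exact hf0 u hu hfu

section Stretch

noncomputable def stretchAbove (c r t : ℝ) : ℝ :=
  if t ≤ c then t else c + r * (t - c)

variable {c r : ℝ}

theorem stretchAbove_strictMono (hr : 0 < r) : StrictMono (stretchAbove c r) := by
  intro s t hst
  unfold stretchAbove
  by_cases ht : t ≤ c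
  · simp [hst.trans_le ht |>.le, ht, hst]
  · by_cases hs : s ≤ c
    · simp only [hs, ht, if_true, if_false]
      nlinarith
    · simp only [hs, ht, if_false]
      nlinarith

theorem stretchAbove_stretchAbove_inv (hr : 0 < r) (t : ℝ) :
    stretchAbove c r (stretchAbove c r⁻¹ t) = t := by
  unfold stretchAbove
  by_cases ht : t ≤ c
  · simp [ht]
  · have hgt : ¬ c + r⁻¹ * (t - c) ≤ c := by
      push Not at ht ⊢
      have : 0 < r⁻¹ * (t - c) := mul_pos (inv_pos.2 hr) (by linarith)
      linarith
    simp only [ht, hgt, if_false]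
    field_simp
    ring

theorem exists_orderIso_fixing_Iic_apply_eq {p q : ℝ} (hp : c < p) (hq : c < q) :
    ∃ θ : ℝ ≃o ℝ, (∀ t ≤ c, θ t = t) ∧ θ p = q := by
  have hr : 0 < (q - c) / (p - c) := div_pos (by linarith) (by linarith)
  refine ⟨(stretchAbove_strictMono hr).orderIsoOfRightInverse _ _
    (stretchAbove_stretchAbove_inv hr), fun t ht => if_pos ht, ?_⟩
  change stretchAbove c _ p = q
  rw [stretchAbove, if_neg hp.not_ge]
  field_simp [(sub_pos.2 hp).ne']
  ring

end Stretch

theorem exists_orderIso_apply_eq {ι : Type*} (s : Finset ι) {a b : ι → ℝ}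
    (hab : ∀ i ∈ s, ∀ j ∈ s, a i ≤ a j ↔ b i ≤ b j) :
    ∃ φ : ℝ ≃o ℝ, ∀ i ∈ s, φ (a i) = b i := by
  classical
  induction s using Finset.induction_on_max_value a with
  | empty => exact ⟨OrderIso.refl ℝ, by simp⟩
  | insert i s his hmax ih =>
    have hab' : ∀ j ∈ s, ∀ k ∈ s, a j ≤ a k ↔ b j ≤ b k := fun j hj k hk =>
      hab j (Finset.mem_insert_of_mem hj) k (Finset.mem_insert_of_mem hk)
    obtain ⟨ψ, hψ⟩ := ih hab'
    have hlt : ∀ j ∈ s, a j < a i ↔ b j < b i := fun j hj => by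
      simpa only [not_le] using
        (hab i (Finset.mem_insert_self i s) j (Finset.mem_insert_of_mem hj)).not
    by_cases hdup : ∃ j ∈ s, a j = a i
    · obtain ⟨j, hj, hji⟩ := hdup
      have hbji : b j = b i := le_antisymm
        ((hab j (Finset.mem_insert_of_mem hj) i (Finset.mem_insert_self i s)).1 hji.le)
        ((hab i (Finset.mem_insert_self i s) j (Finset.mem_insert_of_mem hj)).1 hji.ge)
      refine ⟨ψ, Finset.forall_mem_insert _ _ _ |>.2 ⟨?_, hψ⟩⟩
      rw [← hji, hψ j hj, hbji]
    push Not at hdup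
    have hbelow : ∀ j ∈ s, b j < min (ψ (a i)) (b i) := fun j hj => by
      have hji : a j < a i := (hmax j hj).lt_of_ne (hdup j hj)
      exact lt_min (hψ j hj ▸ ψ.strictMono hji) ((hlt j hj).1 hji)
    -- `c` lies above every `b j` (`j ∈ s`) and below `ψ (a i)` and `b i`; the element
    -- `min _ _ - 1` only makes the set nonempty when `s = ∅`.
    set c := (insert (min (ψ (a i)) (b i) - 1) (s.image b)).max' (Finset.insert_nonempty _ _)
    have hc : c < min (ψ (a i)) (b i) := by
      simp only [c, Finset.max'_lt_iff, Finset.mem_insert, Finset.mem_image]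
      rintro _ (rfl | ⟨j, hj, rfl⟩)
      exacts [sub_one_lt _, hbelow j hj]
    obtain ⟨θ, hθc, hθi⟩ :=
      exists_orderIso_fixing_Iic_apply_eq (lt_min_iff.1 hc).1 (lt_min_iff.1 hc).2
    refine ⟨ψ.trans θ, Finset.forall_mem_insert _ _ _ |>.2 ⟨hθi, fun j hj => ?_⟩⟩
    rw [OrderIso.trans_apply, hψ j hj]
    exact hθc _ (Finset.le_max' _ _ (Finset.mem_insert_of_mem (Finset.mem_image_of_mem b hj)))

section Geometry

variable {d : ℕ}

theorem inner_ne_inner_of_mem_sigmaSet {X : Set (EuclideanSpace ℝ (Fin d))}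
    {u x y : EuclideanSpace ℝ (Fin d)} (hu : u ∈ sigmaSet X) (hx : x ∈ X) (hy : y ∈ X)
    (hxy : x ≠ y) : ⟪u, x⟫ ≠ ⟪u, y⟫ := fun h =>
  hu.2 <| Set.mem_iUnion₂.2 ⟨x, hx, Set.mem_iUnion₂.2 ⟨y, hy, Set.mem_iUnion.2 ⟨hxy, hu.1, h⟩⟩⟩

theorem inner_le_inner_iff_of_mem_connectedComponentIn {X : Set (EuclideanSpace ℝ (Fin d))}
    {v w x y : EuclideanSpace ℝ (Fin d)} (hw : w ∈ connectedComponentIn (sigmaSet X) v)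
    (hx : x ∈ X) (hy : y ∈ X) : ⟪v, x⟫ ≤ ⟪v, y⟫ ↔ ⟪w, x⟫ ≤ ⟪w, y⟫ := by
  rcases eq_or_ne x y with rfl | hxy
  · simp
  have hv : v ∈ sigmaSet X := connectedComponentIn_nonempty_iff.1 ⟨w, hw⟩
  have hne : ∀ u ∈ sigmaSet X, ⟪u, y⟫ - ⟪u, x⟫ ≠ 0 := fun u hu =>
    sub_ne_zero.2 (inner_ne_inner_of_mem_sigmaSet hu hy hx hxy.symm)
  have hsign := isPreconnected_connectedComponentIn.pos_iff_pos_of_ne_zero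
    (by fun_prop) (fun u hu => hne u (connectedComponentIn_subset _ _ hu))
    (mem_connectedComponentIn hv) hw
  have hle : ∀ u ∈ sigmaSet X, ⟪u, x⟫ ≤ ⟪u, y⟫ ↔ 0 < ⟪u, y⟫ - ⟪u, x⟫ := fun u hu => by
    rw [← sub_nonneg, (hne u hu).symm.le_iff_lt]
  rw [hle v hv, hle w (connectedComponentIn_subset _ _ hw)]
  exact hsign

theorem lowerStar_eq_of_orderIso {K : Geometry.SimplicialComplex ℝ (EuclideanSpace ℝ (Fin d))}
    {v w : EuclideanSpace ℝ (Fin d)} (φ : ℝ ≃o ℝ) (hφ : ∀ x ∈ K.vertices, φ ⟪v, x⟫ = ⟪w, x⟫)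
    (x : EuclideanSpace ℝ (Fin d)) : lowerStar K x v = lowerStar K x w := by
  ext σ
  refine and_congr_right fun hσ => and_congr_right fun hxσ => forall₂_congr fun y hy => ?_
  have hvert : ∀ z ∈ σ, z ∈ K.vertices := fun z hz => K.vertices_eq ▸ Set.mem_biUnion hσ hz
  rw [← φ.le_iff_le, hφ y (hvert y hy), hφ x (hvert x hxσ)]

theorem eulerCurve_eq_of_orderIso {K : Geometry.SimplicialComplex ℝ (EuclideanSpace ℝ (Fin d))}
    {v w : EuclideanSpace ℝ (Fin d)} (φ : ℝ ≃o ℝ) (hφ : ∀ x ∈ K.vertices, φ ⟪v, x⟫ = ⟪w, x⟫)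
    (t : ℝ) : eulerCurve K v t = eulerCurve K w (φ t) := by
  unfold eulerCurve
  refine finsum_mem_congr ?_ fun x _ => by rw [lowerStar_eq_of_orderIso φ hφ x]
  ext x
  exact and_congr_right fun hx => by rw [← φ.le_iff_le, hφ x hx]

end Geometry

theorem stmt4_general {d : ℕ} (K : Geometry.SimplicialComplex ℝ (EuclideanSpace ℝ (Fin d)))
    (hfin : K.faces.Finite)
    (v w : EuclideanSpace ℝ (Fin d))
    (hw : w ∈ connectedComponentIn (sigmaSet K.vertices) v) :
    ∃ φ : ℝ ≃o ℝ, ∀ t : ℝ, eulerCurve K v t = eulerCurve K w (φ t) := by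
  have hX : K.vertices.Finite := by
    rw [K.vertices_eq]
    exact hfin.biUnion fun σ _ => σ.finite_toSet
  obtain ⟨φ, hφ⟩ := exists_orderIso_apply_eq hX.toFinset (a := (⟪v, ·⟫)) (b := (⟪w, ·⟫))
    fun x hx y hy => inner_le_inner_iff_of_mem_connectedComponentIn hw
      (hX.mem_toFinset.1 hx) (hX.mem_toFinset.1 hy)
  exact ⟨φ, eulerCurve_eq_of_orderIso φ fun x hx => hφ x (hX.mem_toFinset.2 hx)⟩

/-- if `v, w` lie in the same connected component of `Σ(X)`, where `X` is the
vertex set of a finite geometric simplicial complex `K ⊆ ℝ^d`, then there is an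
order-preserving bijection `φ : ℝ → ℝ` with `E_{K,v}(t) = E_{K,w}(φ t)` for all `t`. -/
theorem stmt4 {d : ℕ} (K : Geometry.SimplicialComplex ℝ (EuclideanSpace ℝ (Fin d)))
    (hfin : K.faces.Finite)
    (v w : EuclideanSpace ℝ (Fin d))
    (hv : v ∈ sigmaSet K.vertices)
    (hw : w ∈ connectedComponentIn (sigmaSet K.vertices) v) :
    ∃ φ : ℝ ≃o ℝ, ∀ t : ℝ, eulerCurve K v t = eulerCurve K w (φ t) :=
  stmt4_general K hfin v w hw
end

section
/- Let T : ℝ^d → ℝ^d be a linear map and let U be a nonempty open subset of the unit sphere S^{d−1} (in the subspace topology) such that ‖T v‖ = 1 for every v ∈ U. Then ‖T x‖ = ‖x‖ for all x ∈ ℝ^d; that is, T is an orthogonal transformation of ℝ^d. -/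
/-!
Normalizing vectors near a point `v ∈ U` shows that `‖T w‖ = ‖w‖` on a whole neighbourhood of `v`
in `ℝ^d`. For any `x`, choose `t ≠ 0` with `v ± t • x` in that neighbourhood: the parallelogram law
applied to `v` and `t • x` on both sides of `T` then gives `‖T (t • x)‖ = ‖t • x‖`.
-/

open Filter Topology Metric

variable {E F : Type*}

theorem LinearMap.eventually_norm_map_eq_of_isOpen_sphere
    [NormedAddCommGroup E] [NormedSpace ℝ E] [NormedAddCommGroup F] [NormedSpace ℝ F]
    (T : E →ₗ[ℝ] F) {U : Set (sphere (0 : E) 1)} (hU : IsOpen U)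
    (hT : ∀ v ∈ U, ‖T v‖ = 1) {v : sphere (0 : E) 1} (hv : v ∈ U) :
    ∀ᶠ w in 𝓝 (v : E), ‖T w‖ = ‖w‖ := by
  obtain ⟨V, hV, rfl⟩ := isOpen_induced_iff.mp hU
  have hv0 : (v : E) ≠ 0 := ne_zero_of_mem_unit_sphere v
  have hnormalize : ContinuousAt (fun w : E => ‖w‖⁻¹ • w) v :=
    (continuous_norm.continuousAt.inv₀ (norm_ne_zero_iff.mpr hv0)).smul continuousAt_id
  have hvV : ‖(v : E)‖⁻¹ • (v : E) ∈ V := by simpa [norm_eq_of_mem_sphere v] using hv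
  filter_upwards [hnormalize.preimage_mem_nhds (hV.mem_nhds hvV),
    eventually_ne_nhds hv0] with w hwV hw0
  have hunit : ‖w‖⁻¹ • w ∈ sphere (0 : E) 1 := by
    simp [norm_smul, norm_ne_zero_iff.mpr hw0]
  have := hT ⟨_, hunit⟩ hwV
  rw [map_smul, norm_smul, norm_inv, norm_norm, inv_mul_eq_one₀ (norm_ne_zero_iff.mpr hw0)] at this
  exact this.symm

theorem LinearMap.norm_map_eq_of_eventually
    [NormedAddCommGroup E] [InnerProductSpace ℝ E] [NormedAddCommGroup F] [InnerProductSpace ℝ F]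
    (T : E →ₗ[ℝ] F) {v : E} (h : ∀ᶠ w in 𝓝 v, ‖T w‖ = ‖w‖) (x : E) :
    ‖T x‖ = ‖x‖ := by
  have hline : ∀ s : ℝ, Tendsto (fun t : ℝ => v + (s * t) • x) (𝓝[≠] 0) (𝓝 v) := fun s =>
    tendsto_nhdsWithin_of_tendsto_nhds (Continuous.tendsto' (by fun_prop) 0 v (by simp))
  obtain ⟨t, ht, hplus, hminus⟩ :=
    (eventually_mem_nhdsWithin.and (((hline 1).eventually h).and ((hline (-1)).eventually h))).exists
  simp only [one_mul, neg_mul, neg_smul, ← sub_eq_add_neg] at hplus hminus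
  have hscaled : ‖T (t • x)‖ = ‖t • x‖ := by
    have hF := parallelogram_law_with_norm ℝ (T v) (T (t • x))
    have hE := parallelogram_law_with_norm ℝ v (t • x)
    rw [← map_add, ← map_sub, hplus, hminus, h.self_of_nhds] at hF
    exact (mul_self_inj (norm_nonneg _) (norm_nonneg _)).mp (by linarith)
  rw [map_smul, norm_smul, norm_smul] at hscaled
  exact mul_left_cancel₀ (norm_ne_zero_iff.mpr ht) hscaled

/-- a linear map `T : ℝ^d → ℝ^d` sending every direction in some nonempty
open subset `U` of the unit sphere to a unit vector preserves the norm of every vector,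
i.e. `T` is an orthogonal transformation. -/
theorem stmt7 {d : ℕ}
    (T : EuclideanSpace ℝ (Fin d) →ₗ[ℝ] EuclideanSpace ℝ (Fin d))
    (U : Set (Metric.sphere (0 : EuclideanSpace ℝ (Fin d)) 1))
    (hUopen : IsOpen U) (hUne : U.Nonempty)
    (hT : ∀ v ∈ U, ‖T (v : EuclideanSpace ℝ (Fin d))‖ = 1) :
    ∀ x : EuclideanSpace ℝ (Fin d), ‖T x‖ = ‖x‖ := by
  obtain ⟨v, hv⟩ := hUne
  exact T.norm_map_eq_of_eventually (T.eventually_norm_map_eq_of_isOpen_sphere hUopen hT hv)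
end
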